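/- Let s > 0 and λ > 0, let u be admissible, set F̃ := ∂_t u + Δu and w(x,t) := e^{sφ(t)} u(x,t). Then ∫_Q |∂_t w|² dx dt + ∫_Q sλ²φ |w|² dx dt + ∫_{ℝ^d} ( sλ|w(x,0)|² + |∇w(x,0)|² ) dx ≤ ∫_Q |F̃|² e^{2sφ} dx dt + ∫_{ℝ^d} ( sλφ(T)|w(x,T)|² + |∇w(x,T)|² ) dx. -/

import Mathlib

open MeasureTheory Real Set

noncomputable section

/-- Spatial partial derivative of `f` in the `i`-th coordinate direction. -/
def spd {d : ℕ} (i : Fin d) (f : (Fin d → ℝ) → ℝ) (x : Fin d → ℝ) : ℝ :=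
  fderiv ℝ f x (Pi.single i 1)

/-- Time derivative `∂_t u`. -/
def tder {d : ℕ} (u : (Fin d → ℝ) → ℝ → ℝ) (x : Fin d → ℝ) (t : ℝ) : ℝ :=
  deriv (u x) t

/-- Squared norm of the spatial gradient, `|∇u|²`. -/
def grad2 {d : ℕ} (u : (Fin d → ℝ) → ℝ → ℝ) (x : Fin d → ℝ) (t : ℝ) : ℝ :=
  ∑ i : Fin d, (spd i (fun y => u y t) x) ^ 2

/-- Norm of the spatial gradient, `|∇u|`. -/
def gradNorm {d : ℕ} (u : (Fin d → ℝ) → ℝ → ℝ) (x : Fin d → ℝ) (t : ℝ) : ℝ :=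
  Real.sqrt (grad2 u x t)

/-- Second spatial partial derivative `∂_i ∂_j u`. -/
def pdij {d : ℕ} (i j : Fin d) (u : (Fin d → ℝ) → ℝ → ℝ) (x : Fin d → ℝ) (t : ℝ) : ℝ :=
  spd i (fun y => spd j (fun z => u z t) y) x

/-- Spatial Laplacian `Δu`. -/
def lap {d : ℕ} (u : (Fin d → ℝ) → ℝ → ℝ) (x : Fin d → ℝ) (t : ℝ) : ℝ :=
  ∑ i : Fin d, pdij i i u x t

/-- `Σ_{i,j=1}^d |∂_i∂_j u|²`. -/
def hess2 {d : ℕ} (u : (Fin d → ℝ) → ℝ → ℝ) (x : Fin d → ℝ) (t : ℝ) : ℝ :=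
  ∑ i : Fin d, ∑ j : Fin d, (pdij i j u x t) ^ 2

/-- `u : ℝ^d × ℝ → ℝ` is admissible: `C^∞` and spatially compactly supported,
uniformly for `t ∈ [0,T]`. -/
def Admissible {d : ℕ} (T : ℝ) (u : (Fin d → ℝ) → ℝ → ℝ) : Prop :=
  ContDiff ℝ (⊤ : ℕ∞) (fun p : (Fin d → ℝ) × ℝ => u p.1 p.2) ∧
  ∃ K₀ : Set (Fin d → ℝ), IsCompact K₀ ∧
    ∀ x t, x ∉ K₀ → t ∈ Set.Icc (0 : ℝ) T → u x t = 0

end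

/-!
With `c = sλφ` and `F = ∂ₜw - c w + Δw`, expand
`F² = (∂ₜw)² + (Δw - c w)² + 2 ∂ₜw Δw - 2 c w ∂ₜw` and use the pointwise identities
`2 ∂ₜw Δw = div (2 ∂ₜw ∇w) - ∂ₜ|∇w|²` and `-2 c w ∂ₜw = c' w² - ∂ₜ(c w²)`.
Dropping `(Δw - c w)² ≥ 0` and integrating over `Q`, the divergence integrates to zero in `x`
because of the compact support, and the time derivatives leave only the boundary terms at
`t = 0` and `t = T`. Finally `e^{sφ} (∂ₜu + Δu) = F`.
-/

open MeasureTheory Set Function Filter Topology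

section SlabIntegral

variable {E : Type*}

def VanishesOutside (K : Set E) (T : ℝ) (h : E → ℝ → ℝ) : Prop :=
  ∀ x ∉ K, ∀ t ∈ Icc 0 T, h x t = 0

variable [MeasurableSpace E]

def SlabIntegrable (μ : Measure E) (T : ℝ) (h : E → ℝ → ℝ) : Prop :=
  Integrable (fun p : ℝ × E => h p.2 p.1) ((volume.restrict (Ioo 0 T)).prod μ)

variable {μ : Measure E} {T : ℝ} {h g : E → ℝ → ℝ}

theorem SlabIntegrable.add (hh : SlabIntegrable μ T h) (hg : SlabIntegrable μ T g) :
    SlabIntegrable μ T fun x t => h x t + g x t :=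
  Integrable.add hh hg

theorem SlabIntegrable.sub (hh : SlabIntegrable μ T h) (hg : SlabIntegrable μ T g) :
    SlabIntegrable μ T fun x t => h x t - g x t :=
  Integrable.sub hh hg

theorem SlabIntegrable.sum {ι : Type*} {s : Finset ι} {h : ι → E → ℝ → ℝ}
    (hh : ∀ i ∈ s, SlabIntegrable μ T (h i)) : SlabIntegrable μ T fun x t => ∑ i ∈ s, h i x t :=
  integrable_finsetSum s hh

theorem integral_Ioo_integral_add [SFinite μ] (hh : SlabIntegrable μ T h)
    (hg : SlabIntegrable μ T g) :
    ∫ t in Ioo 0 T, ∫ x, (h x t + g x t) ∂μ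
      = (∫ t in Ioo 0 T, ∫ x, h x t ∂μ) + ∫ t in Ioo 0 T, ∫ x, g x t ∂μ := by
  rw [← integral_prod _ hh, ← integral_prod _ hg, ← integral_add hh hg]
  exact (integral_prod _ (hh.add hg)).symm

theorem integral_Ioo_integral_sub [SFinite μ] (hh : SlabIntegrable μ T h)
    (hg : SlabIntegrable μ T g) :
    ∫ t in Ioo 0 T, ∫ x, (h x t - g x t) ∂μ
      = (∫ t in Ioo 0 T, ∫ x, h x t ∂μ) - ∫ t in Ioo 0 T, ∫ x, g x t ∂μ := by
  rw [← integral_prod _ hh, ← integral_prod _ hg, ← integral_sub hh hg]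
  exact (integral_prod _ (hh.sub hg)).symm

variable [TopologicalSpace E] [T2Space E] [OpensMeasurableSpace E] [IsFiniteMeasureOnCompacts μ]
  {K : Set E}

theorem VanishesOutside.integrable_slice (h0 : VanishesOutside K T h)
    (hh : Continuous (uncurry h)) (hK : IsCompact K) {t : ℝ} (ht : t ∈ Icc 0 T) :
    Integrable (fun x => h x t) μ :=
  (hh.uncurry_right t).integrable_of_hasCompactSupport
    (HasCompactSupport.intro hK fun x hx => h0 x hx t ht)

theorem VanishesOutside.slabIntegrable [SecondCountableTopology E] [SFinite μ]
    (h0 : VanishesOutside K T h) (hh : Continuous (uncurry h)) (hK : IsCompact K) :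
    SlabIntegrable μ T h := by
  rw [SlabIntegrable, ← Measure.restrict_univ (μ := μ), Measure.prod_restrict]
  refine IntegrableOn.mono_set ?_ (prod_mono Ioo_subset_Icc_self subset_rfl)
  refine IntegrableOn.of_forall_sdiff_eq_zero (s := Icc 0 T ×ˢ K) ?_
    (measurableSet_Icc.prod .univ) ?_
  · exact (hh.comp continuous_swap).continuousOn.integrableOn_compact (isCompact_Icc.prod hK)
  · rintro ⟨t, x⟩ ⟨⟨ht, -⟩, hn⟩
    exact h0 x (fun hx => hn ⟨ht, hx⟩) t ht

end SlabIntegral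

section TimeDerivative

variable {d : ℕ} {g : (Fin d → ℝ) → ℝ → ℝ} {x : Fin d → ℝ} {t : ℝ}

theorem tder_eq_fderiv_uncurry (hg : DifferentiableAt ℝ (uncurry g) (x, t)) :
    tder g x t = fderiv ℝ (uncurry g) (x, t) (0, 1) :=
  (hg.hasFDerivAt.comp_hasDerivAt t ((hasDerivAt_const t x).prodMk (hasDerivAt_id t))).deriv

theorem hasDerivAt_tder (hg : DifferentiableAt ℝ (uncurry g) (x, t)) :
    HasDerivAt (g x) (tder g x t) t :=
  (hg.comp (f := fun τ => (x, τ)) t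
    ((differentiableAt_const x).prodMk differentiableAt_fun_id)).hasDerivAt

theorem ContDiff.uncurry_tder {m n : WithTop ℕ∞} (hg : ContDiff ℝ n (uncurry g))
    (hmn : m + 1 ≤ n) : ContDiff ℝ m (uncurry (tder g)) := by
  have hd : Differentiable ℝ (uncurry g) :=
    hg.differentiable (ne_bot_of_le_ne_bot one_ne_zero (le_add_self.trans hmn))
  have : uncurry (tder g) = fun p => fderiv ℝ (uncurry g) p (0, 1) :=
    funext fun p => tder_eq_fderiv_uncurry (hd p)
  rw [this]
  exact (hg.fderiv_right hmn).clm_apply contDiff_const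

theorem vanishesOutside_tder {K : Set (Fin d → ℝ)} {T : ℝ} (h0 : VanishesOutside K T g)
    (hT : 0 < T) (hc : Continuous (uncurry (tder g))) : VanishesOutside K T (tder g) := by
  intro x hx
  have hIoo : Ioo 0 T ⊆ {τ | tder g x τ = 0} := fun τ hτ => by
    have : g x =ᶠ[𝓝 τ] fun _ => 0 :=
      eventually_of_mem (isOpen_Ioo.mem_nhds hτ) fun σ hσ => h0 x hx σ (Ioo_subset_Icc_self hσ)
    simp [tder, this.deriv_eq]
  rw [← closure_Ioo hT.ne]
  exact closure_minimal hIoo (isClosed_eq (hc.uncurry_left x) continuous_const)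

variable {μ : Measure (Fin d → ℝ)} [IsFiniteMeasureOnCompacts μ] [SFinite μ] {T : ℝ}
  {K : Set (Fin d → ℝ)}

theorem VanishesOutside.slabIntegrable_tder (h0 : VanishesOutside K T g)
    (hg : ContDiff ℝ 1 (uncurry g)) (hK : IsCompact K) (hT : 0 < T) :
    SlabIntegrable μ T (tder g) :=
  have hc := (hg.uncurry_tder (m := 0) le_rfl).continuous
  (vanishesOutside_tder h0 hT hc).slabIntegrable hc hK

theorem integral_Ioo_integral_tder (hT : 0 < T) (hg : ContDiff ℝ 1 (uncurry g))
    (hK : IsCompact K) (hg0 : VanishesOutside K T g) :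
    ∫ t in Ioo 0 T, ∫ x, tder g x t ∂μ = ∫ x, g x T ∂μ - ∫ x, g x 0 ∂μ := by
  have hc : Continuous (uncurry (tder g)) := (hg.uncurry_tder (m := 0) le_rfl).continuous
  have hd : Differentiable ℝ (uncurry g) := hg.differentiable one_ne_zero
  have ftc : ∀ x, ∫ t in Ioo 0 T, tder g x t = g x T - g x 0 := fun x => by
    rw [← integral_Ioc_eq_integral_Ioo, ← intervalIntegral.integral_of_le hT.le]
    exact intervalIntegral.integral_eq_sub_of_hasDerivAt (fun t _ => hasDerivAt_tder (hd _))
      ((hc.uncurry_left x).intervalIntegrable 0 T)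
  rw [integral_integral_swap (f := fun t x => tder g x t) (hg0.slabIntegrable_tder hg hK hT),
    integral_congr_ae (Eventually.of_forall ftc)]
  exact integral_sub (hg0.integrable_slice hg.continuous hK (right_mem_Icc.2 hT.le))
    (hg0.integrable_slice hg.continuous hK (left_mem_Icc.2 hT.le))

end TimeDerivative

theorem integral_fderiv_apply_eq_zero {F : Type*} [NormedAddCommGroup F] [NormedSpace ℝ F]
    [FiniteDimensional ℝ F] [MeasurableSpace F] [BorelSpace F] {μ : Measure F}
    [μ.IsAddHaarMeasure] {g : F → ℝ} (hg : ContDiff ℝ 1 g) (hcs : HasCompactSupport g) (v : F) :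
    ∫ x, fderiv ℝ g x v ∂μ = 0 := by
  have hg' : Integrable (fun x => fderiv ℝ g x v) μ :=
    ((hg.continuous_fderiv one_ne_zero).clm_apply continuous_const).integrable_of_hasCompactSupport
      (hcs.fderiv_apply ℝ v)
  simpa using integral_mul_fderiv_eq_neg_fderiv_mul_of_integrable (μ := μ) (f := g)
    (g := fun _ => (1 : ℝ)) (v := v) (by simpa using hg') (by simp)
    (by simpa using hg.continuous.integrable_of_hasCompactSupport hcs)
    (fun x _ => hg.differentiable one_ne_zero x) (fun _ _ => differentiableAt_const _)

section SpatialDerivative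

variable {d : ℕ} {w f g : (Fin d → ℝ) → ℝ → ℝ} {x : Fin d → ℝ} {t : ℝ} {i : Fin d}

/-- `grad2 w x t` and `lap w x t` unfold to `∑ i, pd i w x t ^ 2` and `∑ i, pd i (pd i w) x t`. -/
noncomputable def pd (i : Fin d) (w : (Fin d → ℝ) → ℝ → ℝ) : (Fin d → ℝ) → ℝ → ℝ :=
  fun x t => spd i (fun y => w y t) x

theorem DifferentiableAt.uncurry_slice (hw : DifferentiableAt ℝ (uncurry w) (x, t)) :
    DifferentiableAt ℝ (fun y => w y t) x :=
  hw.comp (f := fun y => (y, t)) x (differentiableAt_fun_id.prodMk (differentiableAt_const t))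

theorem pd_eq_fderiv_uncurry (hw : DifferentiableAt ℝ (uncurry w) (x, t)) :
    pd i w x t = fderiv ℝ (uncurry w) (x, t) (Pi.single i 1, 0) := by
  have h : HasFDerivAt (fun y => w y t)
      ((fderiv ℝ (uncurry w) (x, t)).comp (ContinuousLinearMap.inl ℝ _ ℝ)) x :=
    hw.hasFDerivAt.comp (f := fun y => (y, t)) x (hasFDerivAt_prodMk_left x t)
  simp [pd, spd, h.fderiv]

theorem ContDiff.uncurry_pd {m n : WithTop ℕ∞} (hw : ContDiff ℝ n (uncurry w))
    (hmn : m + 1 ≤ n) : ContDiff ℝ m (uncurry (pd i w)) := by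
  have hd : Differentiable ℝ (uncurry w) :=
    hw.differentiable (ne_bot_of_le_ne_bot one_ne_zero (le_add_self.trans hmn))
  have : uncurry (pd i w) = fun p => fderiv ℝ (uncurry w) p (Pi.single i 1, 0) :=
    funext fun p => pd_eq_fderiv_uncurry (hd p)
  rw [this]
  exact (hw.fderiv_right hmn).clm_apply contDiff_const

theorem vanishesOutside_pd {K : Set (Fin d → ℝ)} {T : ℝ} (hK : IsClosed K)
    (h0 : VanishesOutside K T w) : VanishesOutside K T (pd i w) := by
  intro x hx t ht
  have : (fun y => w y t) =ᶠ[𝓝 x] fun _ => 0 :=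
    eventually_of_mem (hK.isOpen_compl.mem_nhds hx) fun y hy => h0 y hy t ht
  simp [pd, spd, this.fderiv_eq]

theorem pd_mul (hf : DifferentiableAt ℝ (uncurry f) (x, t))
    (hg : DifferentiableAt ℝ (uncurry g) (x, t)) :
    pd i (fun x t => f x t * g x t) x t = pd i f x t * g x t + f x t * pd i g x t := by
  simp only [pd, spd]
  rw [fderiv_fun_mul hf.uncurry_slice hg.uncurry_slice]
  simp only [add_apply, smul_apply, smul_eq_mul]
  ring

theorem pd_mul_left {a : ℝ → ℝ} (hw : DifferentiableAt ℝ (uncurry w) (x, t)) :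
    pd i (fun x t => a t * w x t) x t = a t * pd i w x t := by
  simp only [pd, spd]
  rw [fderiv_const_mul hw.uncurry_slice]
  rfl

theorem tder_pd_comm (hw : ContDiff ℝ 2 (uncurry w)) :
    tder (pd i w) x t = pd i (tder w) x t := by
  have hD : Differentiable ℝ (fderiv ℝ (uncurry w)) :=
    (hw.fderiv_right (m := 1) le_rfl).differentiable one_ne_zero
  have hsnd : ∀ v v', fderiv ℝ (fun p => fderiv ℝ (uncurry w) p v) (x, t) v'
      = fderiv ℝ (fderiv ℝ (uncurry w)) (x, t) v' v := fun v v' => by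
    rw [fderiv_clm_apply (hD _) (differentiableAt_const _)]
    simp
  have hpd : uncurry (pd i w) = fun p => fderiv ℝ (uncurry w) p (Pi.single i 1, 0) :=
    funext fun p => pd_eq_fderiv_uncurry (hw.differentiable two_ne_zero p)
  have htd : uncurry (tder w) = fun p => fderiv ℝ (uncurry w) p (0, 1) :=
    funext fun p => tder_eq_fderiv_uncurry (hw.differentiable two_ne_zero p)
  rw [tder_eq_fderiv_uncurry ((hw.uncurry_pd (m := 1) le_rfl).differentiable one_ne_zero _),
    pd_eq_fderiv_uncurry ((hw.uncurry_tder (m := 1) le_rfl).differentiable one_ne_zero _),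
    hpd, htd, hsnd, hsnd]
  exact hw.contDiffAt.isSymmSndFDerivAt (by simp) _ _

theorem ContDiff.uncurry_grad2 (hw : ContDiff ℝ 2 (uncurry w)) : ContDiff ℝ 1 (uncurry (grad2 w)) :=
  ContDiff.sum (s := Finset.univ) fun i _ => (hw.uncurry_pd (i := i) (m := 1) (by norm_num)).pow 2

theorem ContDiff.continuous_uncurry_lap (hw : ContDiff ℝ 2 (uncurry w)) :
    Continuous (uncurry (lap w)) :=
  continuous_finsetSum Finset.univ fun i _ => ((hw.uncurry_pd (i := i) (m := 1) (by norm_num)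
    ).uncurry_pd (i := i) (m := 0) le_rfl).continuous

variable {K : Set (Fin d → ℝ)} {T : ℝ}

theorem vanishesOutside_grad2 (hK : IsClosed K) (h0 : VanishesOutside K T w) :
    VanishesOutside K T (grad2 w) := fun x hx t ht => by
  change ∑ i, pd i w x t ^ 2 = 0
  simp [vanishesOutside_pd hK h0 x hx t ht]

theorem vanishesOutside_lap (hK : IsClosed K) (h0 : VanishesOutside K T w) :
    VanishesOutside K T (lap w) := fun x hx t ht =>
  Finset.sum_eq_zero fun i _ => vanishesOutside_pd (i := i) hK (vanishesOutside_pd hK h0) x hx t ht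

end SpatialDerivative

section EnergyIdentity

variable {d : ℕ} {w : (Fin d → ℝ) → ℝ → ℝ} {x : Fin d → ℝ} {t : ℝ}

theorem hasDerivAt_grad2 (hw : ContDiff ℝ 2 (uncurry w)) :
    HasDerivAt (grad2 w x) (∑ i, 2 * pd i w x t * tder (pd i w) x t) t := by
  have hB : ∀ i, ContDiff ℝ 1 (uncurry (pd i w)) := fun i => hw.uncurry_pd (by norm_num)
  refine HasDerivAt.fun_sum fun i _ => ?_
  exact ((hasDerivAt_tder ((hB i).differentiable one_ne_zero (x, t))).fun_pow 2).congr_deriv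
    (by simp)

theorem sum_pd_two_mul_tder_mul_pd (hw : ContDiff ℝ 2 (uncurry w)) :
    ∑ i, pd i (fun x t => 2 * tder w x t * pd i w x t) x t
      = 2 * tder w x t * lap w x t + ∑ i, 2 * pd i w x t * tder (pd i w) x t := by
  have hA := (hw.uncurry_tder (m := 1) (by norm_num)).differentiable one_ne_zero
  have hB : ∀ i, DifferentiableAt ℝ (uncurry (pd i w)) (x, t) := fun i =>
    (hw.uncurry_pd (m := 1) (by norm_num)).differentiable one_ne_zero (x, t)
  rw [lap, Finset.mul_sum, ← Finset.sum_add_distrib]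
  refine Finset.sum_congr rfl fun i _ => ?_
  rw [pd_mul (hA.const_mul 2 (x, t)) (hB i), pd_mul_left (a := fun _ => 2) (hA (x, t)),
    ← tder_pd_comm hw]
  simp only [pdij, pd]
  ring

variable {c : ℝ → ℝ} {c' : ℝ}

theorem tder_mul_left (hc : HasDerivAt c c' t) (hw : DifferentiableAt ℝ (uncurry w) (x, t)) :
    tder (fun x t => c t * w x t) x t = c' * w x t + c t * tder w x t :=
  (hc.mul (hasDerivAt_tder hw)).deriv

theorem lap_mul_left (hw : ContDiff ℝ 2 (uncurry w)) :
    lap (fun x t => c t * w x t) x t = c t * lap w x t := by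
  have hd := hw.differentiable two_ne_zero
  have hB : ∀ i, Differentiable ℝ (uncurry (pd i w)) := fun i =>
    (hw.uncurry_pd (m := 1) (by norm_num)).differentiable one_ne_zero
  have hcB : ∀ i, pd i (fun x t => c t * w x t) = fun x t => c t * pd i w x t := fun i =>
    funext₂ fun x t => pd_mul_left (hd (x, t))
  rw [lap, lap, Finset.mul_sum]
  refine Finset.sum_congr rfl fun i _ => ?_
  change pd i (pd i fun x t => c t * w x t) x t = c t * pd i (pd i w) x t
  rw [hcB, pd_mul_left (hB i (x, t))]

theorem sq_tder_sub_mul_add_lap_eq (hw : ContDiff ℝ 2 (uncurry w)) (hc : HasDerivAt c c' t) :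
    (tder w x t - c t * w x t + lap w x t) ^ 2
      = (lap w x t - c t * w x t) ^ 2 + tder w x t ^ 2 + c' * w x t ^ 2
        + ∑ i, pd i (fun x t => 2 * tder w x t * pd i w x t) x t
        - tder (fun x t => c t * w x t ^ 2 + grad2 w x t) x t := by
  have hG := (hc.fun_mul ((hasDerivAt_tder (hw.differentiable two_ne_zero (x, t))).fun_pow 2)
    ).fun_add (hasDerivAt_grad2 (x := x) hw)
  rw [sum_pd_two_mul_tder_mul_pd hw,
    show tder (fun x t => c t * w x t ^ 2 + grad2 w x t) x t = _ from hG.deriv]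
  push_cast
  ring

end EnergyIdentity

section EnergyInequality

variable {d : ℕ} {μ : Measure (Fin d → ℝ)} [μ.IsAddHaarMeasure] {T : ℝ} {K : Set (Fin d → ℝ)}

theorem integral_Ioo_integral_sum_pd_eq_zero {V : Fin d → (Fin d → ℝ) → ℝ → ℝ}
    (hV : ∀ i, ContDiff ℝ 1 (uncurry (V i))) (hK : IsCompact K)
    (hV0 : ∀ i, VanishesOutside K T (V i)) :
    ∫ t in Ioo 0 T, ∫ x, ∑ i, pd i (V i) x t ∂μ = 0 := by
  refine setIntegral_eq_zero_of_forall_eq_zero fun t ht => ?_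
  have hslice : ∀ i, ContDiff ℝ 1 (fun y => V i y t) := fun i =>
    (hV i).comp (contDiff_id.prodMk contDiff_const)
  have hcs : ∀ i, HasCompactSupport (fun y => V i y t) := fun i =>
    HasCompactSupport.intro hK fun y hy => hV0 i y hy t (Ioo_subset_Icc_self ht)
  change ∫ x, ∑ i, fderiv ℝ (fun y => V i y t) x (Pi.single i 1) ∂μ = 0
  rw [integral_finsetSum _ fun i _ => ((hslice i).continuous_fderiv one_ne_zero).clm_apply
    continuous_const |>.integrable_of_hasCompactSupport ((hcs i).fderiv_apply ℝ _)]
  exact Finset.sum_eq_zero fun i _ => integral_fderiv_apply_eq_zero (hslice i) (hcs i) _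

theorem slabIntegrable_sum_pd {V : Fin d → (Fin d → ℝ) → ℝ → ℝ}
    (hV : ∀ i, ContDiff ℝ 1 (uncurry (V i))) (hK : IsCompact K)
    (hV0 : ∀ i, VanishesOutside K T (V i)) :
    SlabIntegrable μ T fun x t => ∑ i, pd i (V i) x t :=
  SlabIntegrable.sum fun i _ => (vanishesOutside_pd hK.isClosed (hV0 i)).slabIntegrable
    ((hV i).uncurry_pd (m := 0) le_rfl).continuous hK

variable {w : (Fin d → ℝ) → ℝ → ℝ} {c c' : ℝ → ℝ}

theorem integral_Ioo_integral_sq_tder_sub_mul_add_lap (hT : 0 < T)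
    (hw : ContDiff ℝ 2 (uncurry w)) (hK : IsCompact K) (hw0 : VanishesOutside K T w)
    (hc : ∀ t, HasDerivAt c (c' t) t) (hc' : Continuous c') :
    ∫ t in Ioo 0 T, ∫ x, (tder w x t - c t * w x t + lap w x t) ^ 2 ∂μ
      = (∫ t in Ioo 0 T, ∫ x, (lap w x t - c t * w x t) ^ 2 ∂μ)
        + (∫ t in Ioo 0 T, ∫ x, tder w x t ^ 2 ∂μ) + (∫ t in Ioo 0 T, ∫ x, c' t * w x t ^ 2 ∂μ)
        - (∫ x, (c T * w x T ^ 2 + grad2 w x T) ∂μ) + ∫ x, (c 0 * w x 0 ^ 2 + grad2 w x 0) ∂μ := by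
  have hc₁ : ContDiff ℝ 1 c := contDiff_one_iff_deriv.2
    ⟨fun t => (hc t).differentiableAt, (funext fun t => (hc t).deriv) ▸ hc'⟩
  have hA : ContDiff ℝ 1 (uncurry (tder w)) := hw.uncurry_tder (by norm_num)
  have hA0 : VanishesOutside K T (tder w) := vanishesOutside_tder hw0 hT hA.continuous
  have hV : ∀ i, ContDiff ℝ 1 (uncurry fun x t => 2 * tder w x t * pd i w x t) := fun i =>
    (contDiff_const.mul hA).mul (hw.uncurry_pd (by norm_num))
  have hV0 : ∀ i, VanishesOutside K T fun x t => 2 * tder w x t * pd i w x t :=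
    fun i x hx t ht => by simp [hA0 x hx t ht]
  have hG : ContDiff ℝ 1 (uncurry fun x t => c t * w x t ^ 2 + grad2 w x t) :=
    ((hc₁.comp contDiff_snd).mul ((hw.of_le (by norm_num)).pow 2)).add hw.uncurry_grad2
  have hG0 : VanishesOutside K T fun x t => c t * w x t ^ 2 + grad2 w x t := fun x hx t ht => by
    simp [hw0 x hx t ht, vanishesOutside_grad2 hK.isClosed hw0 x hx t ht]
  have hL0 := vanishesOutside_lap hK.isClosed hw0
  have iR : SlabIntegrable μ T fun x t => (lap w x t - c t * w x t) ^ 2 :=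
    VanishesOutside.slabIntegrable (fun x hx t ht => by simp [hL0 x hx t ht, hw0 x hx t ht])
      ((hw.continuous_uncurry_lap.sub
        ((hc₁.continuous.comp continuous_snd).mul hw.continuous)).pow 2) hK
  have iA : SlabIntegrable μ T fun x t => tder w x t ^ 2 :=
    VanishesOutside.slabIntegrable (fun x hx t ht => by simp [hA0 x hx t ht])
      (hA.continuous.pow 2) hK
  have iW : SlabIntegrable μ T fun x t => c' t * w x t ^ 2 :=
    VanishesOutside.slabIntegrable (fun x hx t ht => by simp [hw0 x hx t ht])
      ((hc'.comp continuous_snd).mul (hw.continuous.pow 2)) hK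
  have iV := slabIntegrable_sum_pd (μ := μ) hV hK hV0
  simp_rw [sq_tder_sub_mul_add_lap_eq hw (hc _)]
  rw [integral_Ioo_integral_sub (((iR.add iA).add iW).add iV) (hG0.slabIntegrable_tder hG hK hT),
    integral_Ioo_integral_add ((iR.add iA).add iW) iV, integral_Ioo_integral_add (iR.add iA) iW,
    integral_Ioo_integral_add iR iA, integral_Ioo_integral_sum_pd_eq_zero hV hK hV0,
    integral_Ioo_integral_tder hT hG hK hG0]
  ring

theorem energy_le_integral_sq_tder_sub_mul_add_lap (hT : 0 < T) (hw : ContDiff ℝ 2 (uncurry w))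
    (hK : IsCompact K) (hw0 : VanishesOutside K T w) (hc : ∀ t, HasDerivAt c (c' t) t)
    (hc' : Continuous c') :
    (∫ t in Ioo 0 T, ∫ x, tder w x t ^ 2 ∂μ) + (∫ t in Ioo 0 T, ∫ x, c' t * w x t ^ 2 ∂μ)
        + ∫ x, (c 0 * w x 0 ^ 2 + grad2 w x 0) ∂μ
      ≤ (∫ t in Ioo 0 T, ∫ x, (tder w x t - c t * w x t + lap w x t) ^ 2 ∂μ)
        + ∫ x, (c T * w x T ^ 2 + grad2 w x T) ∂μ := by
  have hR : 0 ≤ ∫ t in Ioo 0 T, ∫ x, (lap w x t - c t * w x t) ^ 2 ∂μ :=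
    setIntegral_nonneg measurableSet_Ioo fun t _ => integral_nonneg fun x => sq_nonneg _
  rw [integral_Ioo_integral_sq_tder_sub_mul_add_lap hT hw hK hw0 hc hc']
  linarith

end EnergyInequality

theorem energy_estimate_conjugated_general
    (d : ℕ) (T : ℝ) (hT : 0 < T) (s lam : ℝ)
    (u : (Fin d → ℝ) → ℝ → ℝ) (hu : Admissible T u)
    (w : (Fin d → ℝ) → ℝ → ℝ)
    (hw : ∀ x t, w x t = Real.exp (s * Real.exp (lam * t)) * u x t) :
    (∫ t in Set.Ioo (0:ℝ) T, ∫ x : Fin d → ℝ, (tder w x t) ^ 2)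
    + (∫ t in Set.Ioo (0:ℝ) T, ∫ x : Fin d → ℝ,
        s * lam ^ 2 * Real.exp (lam * t) * (w x t) ^ 2)
    + (∫ x : Fin d → ℝ, (s * lam * (w x 0) ^ 2 + grad2 w x 0))
    ≤ (∫ t in Set.Ioo (0:ℝ) T, ∫ x : Fin d → ℝ,
        (tder u x t + lap u x t) ^ 2 * Real.exp (2 * s * Real.exp (lam * t)))
      + (∫ x : Fin d → ℝ,
          (s * lam * Real.exp (lam * T) * (w x T) ^ 2 + grad2 w x T)) := by
  obtain ⟨hu, K, hK, hu0⟩ := hu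
  have hφ : ∀ t, HasDerivAt (fun t => s * lam * exp (lam * t)) (s * lam ^ 2 * exp (lam * t)) t :=
    fun t => (((hasDerivAt_id' t).const_mul lam).exp.const_mul (s * lam)).congr_deriv (by ring)
  have ha : ∀ t, HasDerivAt (fun t => exp (s * exp (lam * t)))
      (s * lam * exp (lam * t) * exp (s * exp (lam * t))) t :=
    fun t => (((hasDerivAt_id' t).const_mul lam).exp.const_mul s).exp.congr_deriv (by ring)
  have hw' : w = fun x t => exp (s * exp (lam * t)) * u x t := funext₂ hw
  have hu2 : ContDiff ℝ 2 (uncurry u) := hu.of_le (WithTop.coe_le_coe.2 le_top)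
  have hw2 : ContDiff ℝ 2 (uncurry w) := by
    rw [hw']
    exact ((by fun_prop : ContDiff ℝ 2 fun t => exp (s * exp (lam * t))).comp contDiff_snd).mul hu2
  have hw0 : VanishesOutside K T w := fun x hx t ht => by simp [hw, hu0 x t hx ht]
  have hconj : ∀ x t, (tder u x t + lap u x t) ^ 2 * exp (2 * s * exp (lam * t))
      = (tder w x t - s * lam * exp (lam * t) * w x t + lap w x t) ^ 2 := fun x t => by
    rw [hw', tder_mul_left (ha t) (hu2.differentiable two_ne_zero (x, t)), lap_mul_left hu2,
      show 2 * s * exp (lam * t) = s * exp (lam * t) + s * exp (lam * t) by ring, exp_add]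
    ring
  have := energy_le_integral_sq_tder_sub_mul_add_lap (μ := volume) hT hw2 hK hw0 hφ (by fun_prop)
  simp only [hconj, mul_zero, exp_zero, mul_one] at this ⊢
  exact this

/-- The intermediate energy estimate (4.5) in the Second Step of the proof of
Theorem 2.1, for the conjugated function `w = e^{sφ} u`, `φ(t) = e^{λt}`. -/
theorem energy_estimate_conjugated
    (d : ℕ) (hd : 1 ≤ d) (T : ℝ) (hT : 0 < T) (s lam : ℝ) (hs : 0 < s) (hlam : 0 < lam)
    (u : (Fin d → ℝ) → ℝ → ℝ) (hu : Admissible T u)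
    (w : (Fin d → ℝ) → ℝ → ℝ)
    (hw : ∀ x t, w x t = Real.exp (s * Real.exp (lam * t)) * u x t) :
    (∫ t in Set.Ioo (0:ℝ) T, ∫ x : Fin d → ℝ, (tder w x t) ^ 2)
    + (∫ t in Set.Ioo (0:ℝ) T, ∫ x : Fin d → ℝ,
        s * lam ^ 2 * Real.exp (lam * t) * (w x t) ^ 2)
    + (∫ x : Fin d → ℝ, (s * lam * (w x 0) ^ 2 + grad2 w x 0))
    ≤ (∫ t in Set.Ioo (0:ℝ) T, ∫ x : Fin d → ℝ,
        (tder u x t + lap u x t) ^ 2 * Real.exp (2 * s * Real.exp (lam * t)))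
      + (∫ x : Fin d → ℝ,
          (s * lam * Real.exp (lam * T) * (w x T) ^ 2 + grad2 w x T)) :=
  energy_estimate_conjugated_general d T hT s lam u hu w hw
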